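/- arXiv:1201.0662 — 2 statements merged into one kernel-verified Lean document; each statement's English description precedes it below -/
import Mathlib

section
/- For all z ≥ 0, the standard normal CDF satisfies F_Z(z) ≥ 1 − (1/2)·exp(−√(2/π)·z), where F_Z(z) = (1/√(2π)) ∫_{−∞}^{z} e^{−t²/2} dt. -/
/-!
Write `a = √(2/π)`. Both `e^{-t²/2}` and `e^{-a t}` have integral `1/a = √(2π)/2` over
`(0, ∞)`, and the Gaussian lies above the exponential exactly on `(0, 2a]`. A function that
starts above another of the same total mass and crosses it only once has the smaller tails, so
`∫_z^∞ e^{-t²/2} dt ≤ e^{-a z}/a`, which is the claim after normalising by `√(2π)`.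
-/

open MeasureTheory Set Real

theorem setIntegral_Ioi_le_of_le_of_ge {f g : ℝ → ℝ} {a c z : ℝ} (haz : a ≤ z)
    (hf : IntegrableOn f (Ioi a)) (hg : IntegrableOn g (Ioi a))
    (hfg : ∫ t in Ioi a, f t = ∫ t in Ioi a, g t)
    (h_before : ∀ t ∈ Ioc a c, g t ≤ f t) (h_after : ∀ t ∈ Ioi c, f t ≤ g t) :
    ∫ t in Ioi z, f t ≤ ∫ t in Ioi z, g t := by
  rcases le_or_gt z c with hzc | hcz
  · have split : ∀ φ : ℝ → ℝ, IntegrableOn φ (Ioi a) →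
        (∫ t in Ioc a z, φ t) + ∫ t in Ioi z, φ t = ∫ t in Ioi a, φ t := fun φ hφ => by
      rw [← Ioc_union_Ioi_eq_Ioi haz, setIntegral_union (Ioc_disjoint_Ioi le_rfl)
        measurableSet_Ioi (hφ.mono_set Ioc_subset_Ioi_self) (hφ.mono_set (Ioi_subset_Ioi haz))]
    have head : ∫ t in Ioc a z, g t ≤ ∫ t in Ioc a z, f t :=
      setIntegral_mono_on (hg.mono_set Ioc_subset_Ioi_self) (hf.mono_set Ioc_subset_Ioi_self)
        measurableSet_Ioc fun t ht => h_before t ⟨ht.1, ht.2.trans hzc⟩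
    linarith [split f hf, split g hg]
  · exact setIntegral_mono_on (hf.mono_set (Ioi_subset_Ioi haz))
      (hg.mono_set (Ioi_subset_Ioi haz)) measurableSet_Ioi fun t ht => h_after t (hcz.trans ht)

theorem exp_neg_sq_div_two_eq :
    (fun t : ℝ => exp (-t ^ 2 / 2)) = fun t => exp (-(1 / 2) * t ^ 2) := by
  ext t; ring_nf

theorem integrable_exp_neg_sq_div_two : Integrable fun t : ℝ => exp (-t ^ 2 / 2) := by
  rw [exp_neg_sq_div_two_eq]
  exact integrable_exp_neg_mul_sq (by norm_num)

theorem integral_exp_neg_sq_div_two : ∫ t, exp (-t ^ 2 / 2) = √(2 * π) := by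
  rw [exp_neg_sq_div_two_eq, integral_gaussian, show π / (1 / 2) = 2 * π by ring]

theorem integral_Ioi_zero_exp_neg_sq_div_two :
    ∫ t in Ioi 0, exp (-t ^ 2 / 2) = √(2 * π) / 2 := by
  rw [exp_neg_sq_div_two_eq, integral_gaussian_Ioi, show π / (1 / 2) = 2 * π by ring]

theorem sqrt_two_div_pi_mul_sqrt_two_mul_pi : √(2 / π) * √(2 * π) = 2 := by
  rw [← sqrt_mul (by positivity), show 2 / π * (2 * π) = 2 ^ 2 by field_simp,
    sqrt_sq zero_le_two]

theorem integral_Ioi_exp_neg_sq_div_two_le {z : ℝ} (hz : 0 ≤ z) :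
    ∫ t in Ioi z, exp (-t ^ 2 / 2) ≤ exp (-√(2 / π) * z) / √(2 / π) := by
  set a := √(2 / π)
  have ha : 0 < a := sqrt_pos.2 (by positivity)
  have exp_tail : ∀ x, ∫ t in Ioi x, exp (-a * t) = exp (-a * x) / a := fun x => by
    rw [integral_exp_mul_Ioi (neg_neg_iff_pos.2 ha), neg_div_neg_eq]
  rw [← exp_tail z]
  refine setIntegral_Ioi_le_of_le_of_ge (c := 2 * a) hz
    integrable_exp_neg_sq_div_two.integrableOn (integrableOn_exp_mul_Ioi (neg_neg_iff_pos.2 ha) 0)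
    ?_ ?_ ?_
  · rw [integral_Ioi_zero_exp_neg_sq_div_two, exp_tail, mul_zero, exp_zero,
      eq_div_iff ha.ne', mul_comm, ← mul_div_assoc, sqrt_two_div_pi_mul_sqrt_two_mul_pi,
      div_self two_ne_zero]
  · exact fun t ⟨ht0, ht⟩ => exp_le_exp.2 (by nlinarith)
  · exact fun t (ht : 2 * a < t) => exp_le_exp.2 (by nlinarith)

/-- Lower bound on the standard normal CDF:
    F_Z(z) ≥ 1 - (1/2)·exp(-√(2/π)·z) for z ≥ 0. -/
theorem normal_cdf_lower_bound :
    ∀ z : ℝ, 0 ≤ z →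
      1 - (1 / 2) * Real.exp (-(Real.sqrt (2 / Real.pi)) * z)
        ≤ (Real.sqrt (2 * Real.pi))⁻¹ * ∫ t in Set.Iic z, Real.exp (-t ^ 2 / 2) := by
  intro z hz
  have hS : 0 < √(2 * π) := sqrt_pos.2 (by positivity)
  have cdf_eq :
      ∫ t in Iic z, exp (-t ^ 2 / 2) = √(2 * π) - ∫ t in Ioi z, exp (-t ^ 2 / 2) := by
    rw [← integral_exp_neg_sq_div_two, ← integral_add_compl measurableSet_Iic
      integrable_exp_neg_sq_div_two, compl_Iic, add_sub_cancel_right]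
  have tail_le := mul_le_mul_of_nonneg_left (integral_Ioi_exp_neg_sq_div_two_le hz)
    (inv_nonneg.2 hS.le)
  have normalise : (√(2 * π))⁻¹ * (exp (-√(2 / π) * z) / √(2 / π)) =
      1 / 2 * exp (-√(2 / π) * z) := by
    field_simp
    rw [mul_comm, sqrt_two_div_pi_mul_sqrt_two_mul_pi]
  rw [cdf_eq, mul_sub, inv_mul_cancel₀ hS.ne']
  linarith
end

section
/- Let X be a positive random variable such that E[X^{−f}] < ∞ for all f in an interval. Define g(f) = E[X^{−f}] · E[X^{−(1−f)}]. Then g is log-convex (hence convex): for all f₁, f₂ and c ∈ [0,1], g(c f₁ + (1−c) f₂) ≤ g(f₁)^c · g(f₂)^{1−c}; moreover g(f) = g(1−f) for all f, and g attains a global minimum at f = 1/2. -/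
/-!
Hölder's inequality with exponents `1/c` and `1/(1-c)` makes the moment map `f ↦ E[X^{-f}]`
log-convex. Log-convexity survives the reflection `f ↦ 1 - f` and products of nonnegative
functions, so `g` is log-convex; and a log-convex function takes at the midpoint `1/2` of `f` and
`1 - f` at most the larger of its two values there, which coincide since `g(f) = g(1 - f)`.
-/

open MeasureTheory

/-- For positive `M` this says that `log ∘ M` is convex; the `rpow` form also allows zeros. -/
def IsLogConvex (M : ℝ → ℝ) : Prop :=
  ∀ a b : ℝ, ∀ c ∈ Set.Icc (0 : ℝ) 1, M (c * a + (1 - c) * b) ≤ M a ^ c * M b ^ (1 - c)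

namespace IsLogConvex

variable {M N : ℝ → ℝ}

theorem mul (hM : IsLogConvex M) (hN : IsLogConvex N) (hM0 : ∀ x, 0 ≤ M x)
    (hN0 : ∀ x, 0 ≤ N x) : IsLogConvex (fun x => M x * N x) := by
  intro a b c hc
  calc M (c * a + (1 - c) * b) * N (c * a + (1 - c) * b)
      ≤ (M a ^ c * M b ^ (1 - c)) * (N a ^ c * N b ^ (1 - c)) :=
        mul_le_mul (hM a b c hc) (hN a b c hc) (hN0 _)
          (mul_nonneg (Real.rpow_nonneg (hM0 a) c) (Real.rpow_nonneg (hM0 b) _))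
    _ = (M a * N a) ^ c * (M b * N b) ^ (1 - c) := by
        rw [Real.mul_rpow (hM0 a) (hN0 a), Real.mul_rpow (hM0 b) (hN0 b)]
        ring

theorem comp_const_sub (hM : IsLogConvex M) (β : ℝ) : IsLogConvex (fun x => M (β - x)) := by
  intro a b c hc
  have hβ : β - (c * a + (1 - c) * b) = c * (β - a) + (1 - c) * (β - b) := by ring
  simpa only [hβ] using hM (β - a) (β - b) c hc

theorem le_max (hM : IsLogConvex M) {a b : ℝ} (ha : 0 ≤ M a) (hb : 0 ≤ M b) {c : ℝ}
    (hc : c ∈ Set.Icc (0 : ℝ) 1) : M (c * a + (1 - c) * b) ≤ max (M a) (M b) := by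
  have hmax : 0 ≤ max (M a) (M b) := ha.trans (le_max_left _ _)
  calc M (c * a + (1 - c) * b) ≤ M a ^ c * M b ^ (1 - c) := hM a b c hc
    _ ≤ max (M a) (M b) ^ c * max (M a) (M b) ^ (1 - c) :=
        mul_le_mul (Real.rpow_le_rpow ha (le_max_left _ _) hc.1)
          (Real.rpow_le_rpow hb (le_max_right _ _) (sub_nonneg.mpr hc.2))
          (Real.rpow_nonneg hb _) (Real.rpow_nonneg hmax _)
    _ = max (M a) (M b) := by
        rw [← Real.rpow_add' hmax (by norm_num), add_sub_cancel, Real.rpow_one]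

end IsLogConvex

theorem integral_rpow_mul_rpow_le {α : Type*} [MeasurableSpace α] {μ : Measure α}
    {f g : α → ℝ} (hf0 : 0 ≤ᵐ[μ] f) (hg0 : 0 ≤ᵐ[μ] g) (hf : Integrable f μ)
    (hg : Integrable g μ) {p q : ℝ} (hp : 0 ≤ p) (hq : 0 ≤ q) (hpq : p + q = 1) :
    ∫ x, f x ^ p * g x ^ q ∂μ ≤ (∫ x, f x ∂μ) ^ p * (∫ x, g x ∂μ) ^ q := by
  have hfg0 : 0 ≤ᵐ[μ] fun x => f x ^ p * g x ^ q := by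
    filter_upwards [hf0, hg0] with x hfx hgx
    exact mul_nonneg (Real.rpow_nonneg hfx p) (Real.rpow_nonneg hgx q)
  have hofReal : (fun x => ENNReal.ofReal (f x ^ p * g x ^ q))
      =ᵐ[μ] fun x => ENNReal.ofReal (f x) ^ p * ENNReal.ofReal (g x) ^ q := by
    filter_upwards [hf0, hg0] with x hfx hgx
    rw [ENNReal.ofReal_mul (Real.rpow_nonneg hfx p), ENNReal.ofReal_rpow_of_nonneg hfx hp,
      ENNReal.ofReal_rpow_of_nonneg hgx hq]
  have hfg : AEStronglyMeasurable (fun x => f x ^ p * g x ^ q) μ :=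
    ((hf.aemeasurable.pow_const p).mul (hg.aemeasurable.pow_const q)).aestronglyMeasurable
  rw [integral_eq_lintegral_of_nonneg_ae hfg0 hfg, integral_eq_lintegral_of_nonneg_ae hf0
    hf.aestronglyMeasurable, integral_eq_lintegral_of_nonneg_ae hg0 hg.aestronglyMeasurable,
    ENNReal.toReal_rpow, ENNReal.toReal_rpow, ← ENNReal.toReal_mul, lintegral_congr_ae hofReal]
  refine ENNReal.toReal_mono ?_ (ENNReal.lintegral_mul_norm_pow_le
    hf.aemeasurable.ennreal_ofReal hg.aemeasurable.ennreal_ofReal hp hq hpq)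
  exact ENNReal.mul_ne_top (ENNReal.rpow_ne_top_of_nonneg hp hf.lintegral_lt_top.ne)
    (ENNReal.rpow_ne_top_of_nonneg hq hg.lintegral_lt_top.ne)

theorem integral_rpow_convexComb_le {Ω : Type*} [MeasurableSpace Ω] {μ : Measure Ω}
    {X : Ω → ℝ} (hX : ∀ᵐ ω ∂μ, 0 < X ω) {a b : ℝ} (ha : Integrable (fun ω => X ω ^ a) μ)
    (hb : Integrable (fun ω => X ω ^ b) μ) {c : ℝ} (hc : c ∈ Set.Icc (0 : ℝ) 1) :
    ∫ ω, X ω ^ (c * a + (1 - c) * b) ∂μ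
      ≤ (∫ ω, X ω ^ a ∂μ) ^ c * (∫ ω, X ω ^ b ∂μ) ^ (1 - c) := by
  have hsplit : (fun ω => X ω ^ (c * a + (1 - c) * b))
      =ᵐ[μ] fun ω => (X ω ^ a) ^ c * (X ω ^ b) ^ (1 - c) := by
    filter_upwards [hX] with ω hω
    rw [← Real.rpow_mul hω.le, ← Real.rpow_mul hω.le, ← Real.rpow_add hω, mul_comm a, mul_comm b]
  have hpow0 : ∀ s : ℝ, 0 ≤ᵐ[μ] fun ω => X ω ^ s := fun s => by
    filter_upwards [hX] with ω hω
    exact Real.rpow_nonneg hω.le s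
  rw [integral_congr_ae hsplit]
  exact integral_rpow_mul_rpow_le (hpow0 a) (hpow0 b) ha hb hc.1 (sub_nonneg.mpr hc.2)
    (add_sub_cancel _ _)

theorem isLogConvex_integral_rpow_neg {Ω : Type*} [MeasurableSpace Ω] {μ : Measure Ω}
    {X : Ω → ℝ} (hX : ∀ᵐ ω ∂μ, 0 < X ω) (hint : ∀ f : ℝ, Integrable (fun ω => X ω ^ (-f)) μ) :
    IsLogConvex fun f => ∫ ω, X ω ^ (-f) ∂μ := by
  intro a b c hc
  dsimp only
  rw [show -(c * a + (1 - c) * b) = c * -a + (1 - c) * -b by ring]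
  exact integral_rpow_convexComb_le hX (hint a) (hint b) hc

theorem fpc_logconvex_min_at_half_general {Ω : Type*} [MeasurableSpace Ω]
    (μ : Measure Ω) (X : Ω → ℝ)
    (hX : ∀ᵐ ω ∂μ, 0 < X ω)
    (hint : ∀ f : ℝ, Integrable (fun ω => X ω ^ (-f)) μ) :
    (∀ f₁ f₂ : ℝ, ∀ c ∈ Set.Icc (0:ℝ) 1,
      ((∫ ω, X ω ^ (-(c * f₁ + (1 - c) * f₂)) ∂μ)
          * ∫ ω, X ω ^ (-(1 - (c * f₁ + (1 - c) * f₂))) ∂μ)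
        ≤ ((∫ ω, X ω ^ (-f₁) ∂μ) * ∫ ω, X ω ^ (-(1 - f₁)) ∂μ) ^ c
          * ((∫ ω, X ω ^ (-f₂) ∂μ) * ∫ ω, X ω ^ (-(1 - f₂)) ∂μ) ^ (1 - c)) ∧
    (∀ f : ℝ, (∫ ω, X ω ^ (-f) ∂μ) * ∫ ω, X ω ^ (-(1 - f)) ∂μ
      = (∫ ω, X ω ^ (-(1 - f)) ∂μ) * ∫ ω, X ω ^ (-(1 - (1 - f))) ∂μ) ∧
    (∀ f : ℝ, (∫ ω, X ω ^ (-(1/2 : ℝ)) ∂μ) * ∫ ω, X ω ^ (-(1 - (1/2 : ℝ))) ∂μ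
      ≤ (∫ ω, X ω ^ (-f) ∂μ) * ∫ ω, X ω ^ (-(1 - f)) ∂μ) := by
  set M : ℝ → ℝ := fun f => ∫ ω, X ω ^ (-f) ∂μ
  have hM : IsLogConvex M := isLogConvex_integral_rpow_neg hX hint
  have hM0 : ∀ f, 0 ≤ M f := fun f =>
    integral_nonneg_of_ae (by filter_upwards [hX] with ω hω using Real.rpow_nonneg hω.le _)
  have hg : IsLogConvex fun f => M f * M (1 - f) := hM.mul (hM.comp_const_sub 1) hM0 (hM0 <| 1 - ·)
  have hsymm : ∀ f, M f * M (1 - f) = M (1 - f) * M (1 - (1 - f)) := fun f => by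
    rw [sub_sub_cancel, mul_comm]
  refine ⟨hg, hsymm, fun f => ?_⟩
  have hmid := hg.le_max (a := f) (b := 1 - f) (mul_nonneg (hM0 _) (hM0 _))
    (mul_nonneg (hM0 _) (hM0 _)) (c := 1 / 2) ⟨by norm_num, by norm_num⟩
  rwa [← hsymm, max_self, show 1 / 2 * f + (1 - 1 / 2) * (1 - f) = 1 / 2 by ring] at hmid

/-- g(f) = E[X^{-f}]·E[X^{-(1-f)}] is log-convex, symmetric about f = 1/2,
    and attains its global minimum at f = 1/2. -/
theorem fpc_logconvex_min_at_half {Ω : Type*} [MeasurableSpace Ω]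
    (μ : Measure Ω) [IsProbabilityMeasure μ] (X : Ω → ℝ)
    (hX : ∀ᵐ ω ∂μ, 0 < X ω)
    (hint : ∀ f : ℝ, Integrable (fun ω => X ω ^ (-f)) μ) :
    (∀ f₁ f₂ : ℝ, ∀ c ∈ Set.Icc (0:ℝ) 1,
      ((∫ ω, X ω ^ (-(c * f₁ + (1 - c) * f₂)) ∂μ)
          * ∫ ω, X ω ^ (-(1 - (c * f₁ + (1 - c) * f₂))) ∂μ)
        ≤ ((∫ ω, X ω ^ (-f₁) ∂μ) * ∫ ω, X ω ^ (-(1 - f₁)) ∂μ) ^ c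
          * ((∫ ω, X ω ^ (-f₂) ∂μ) * ∫ ω, X ω ^ (-(1 - f₂)) ∂μ) ^ (1 - c)) ∧
    (∀ f : ℝ, (∫ ω, X ω ^ (-f) ∂μ) * ∫ ω, X ω ^ (-(1 - f)) ∂μ
      = (∫ ω, X ω ^ (-(1 - f)) ∂μ) * ∫ ω, X ω ^ (-(1 - (1 - f))) ∂μ) ∧
    (∀ f : ℝ, (∫ ω, X ω ^ (-(1/2 : ℝ)) ∂μ) * ∫ ω, X ω ^ (-(1 - (1/2 : ℝ))) ∂μ
      ≤ (∫ ω, X ω ^ (-f) ∂μ) * ∫ ω, X ω ^ (-(1 - f)) ∂μ) :=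
  fpc_logconvex_min_at_half_general μ X hX hint
end
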